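/- Let G be a group acting on a set X, let S be an equivalence relation on X with only finitely many equivalence classes, and let U be an equivalence relation on X such that for every g ∈ G and every (x, y) ∈ S one has (g•x, g•y) ∈ U. Let T be the equivalence relation on X generated by the set ⋃_{g ∈ G} {(g•x, g•y) : (x, y) ∈ S}. Then: (i) S ⊆ T ⊆ U; (ii) T is G-invariant, i.e. (x, y) ∈ T implies (g•x, g•y) ∈ T for all g ∈ G; and (iii) T has only finitely many equivalence classes. -/
import Mathlib


/-- Let `G` be a group acting on a set `X`, let `S` be an equivalence relation
on `X` with only finitely many equivalence classes, and let `U` be an equivalence relation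
on `X` such that for every `g ∈ G` and `(x, y) ∈ S` one has `(g•x, g•y) ∈ U`.  Let `T` be
the equivalence relation on `X` generated by `⋃_{g ∈ G} {(g•x, g•y) : (x, y) ∈ S}`.  Then
(i) `S ⊆ T ⊆ U`; (ii) `T` is `G`-invariant; (iii) `T` has finitely many classes. -/
theorem stmt0 {G X : Type*} [Group G] [MulAction G X]
    (S U : X → X → Prop) (hS : Equivalence S) (hU : Equivalence U)
    (hSfin : Finite (Quot S))
    (hSU : ∀ (g : G) (x y : X), S x y → U (g • x) (g • y))
    (T : X → X → Prop)
    (hT : T = Relation.EqvGen (fun a b => ∃ (g : G) (x y : X), S x y ∧ a = g • x ∧ b = g • y)) :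
    (∀ x y, S x y → T x y) ∧ (∀ x y, T x y → U x y) ∧
      (∀ (g : G) (x y : X), T x y → T (g • x) (g • y)) ∧ Finite (Quot T) := by
  subst hT
  have hST : ∀ x y, S x y →
      Relation.EqvGen (fun a b => ∃ (g : G) (x y : X), S x y ∧ a = g • x ∧ b = g • y) x y := by
    intro x y h
    exact Relation.EqvGen.rel _ _ ⟨1, x, y, h, (one_smul G x).symm, (one_smul G y).symm⟩
  refine ⟨hST, ?_, ?_, ?_⟩
  · intro x y h
    induction h with
    | rel a b hab =>
      obtain ⟨g, x, y, hxy, rfl, rfl⟩ := hab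
      exact hSU g x y hxy
    | refl a => exact hU.refl a
    | symm a b _ ih => exact hU.symm ih
    | trans a b c _ _ ih1 ih2 => exact hU.trans ih1 ih2
  · intro g x y h
    induction h with
    | rel a b hab =>
      obtain ⟨g', x, y, hxy, rfl, rfl⟩ := hab
      exact Relation.EqvGen.rel _ _ ⟨g * g', x, y, hxy, (mul_smul g g' x).symm,
        (mul_smul g g' y).symm⟩
    | refl a => exact Relation.EqvGen.refl _
    | symm a b _ ih => exact Relation.EqvGen.symm _ _ ih
    | trans a b c _ _ ih1 ih2 => exact Relation.EqvGen.trans _ _ _ ih1 ih2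
  · have hsurj : Function.Surjective
        (Quot.lift (fun x => Quot.mk _ x) (fun a b h => Quot.sound (hST a b h)) :
          Quot S → Quot (Relation.EqvGen _)) := by
      intro q
      obtain ⟨x, rfl⟩ := Quot.exists_rep q
      exact ⟨Quot.mk S x, rfl⟩
    exact Finite.of_surjective _ hsurj
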